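/- Monotonicity with respect to the control sets (Lemma 1): fix a common revision sequence (R(t)) and let (x(t),y(t)) and (x̄(t),ȳ(t)) be the controlled trajectories for control sets (C^X, C^Y) and (C̄^X, C̄^Y) respectively, with C^X ⊆ C̄^X and C^Y ⊆ C̄^Y. Then x̄_i(t) ≥ x_i(t) and ȳ_i(t) ≥ y_i(t) for all i ∈ V and all t ≥ 0; consequently, if (x(t),y(t)) reaches the +1 consensus, so does (x̄(t),ȳ(t)), and if (x̄(t),ȳ(t)) does not reach the +1 consensus, neither does (x(t),y(t)). -/
import Mathlib


/-- The quantity `δ_i(z)` determining the best-response action. -/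
noncomputable def delta (n : ℕ) (A W : Fin n → Fin n → ℝ) (l b : Fin n → ℝ)
    (i : Fin n) (x y : Fin n → ℝ) : ℝ :=
  2 * b i * (1 - l i) * ∑ j, W i j * y j + (1 - b i) * ∑ j, A i j * x j

/-- Assumption 1 on the revision sequence: there is `T < ∞` such that every
agent activates at least once in every window of `T` consecutive time steps. -/
def RevOK (n : ℕ) (R : ℕ → Finset (Fin n)) : Prop :=
  ∃ T : ℕ, ∀ t : ℕ, ∀ i : Fin n, ∃ s, s < T ∧ i ∈ R (t + s)

/-- The controlled coevolutionary trajectory with control sets `CX, CY`: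
controlled coordinates are pinned to `+1` for all `t ≥ 0`, uncontrolled ones
start at `-1` and follow the best-response dynamics when activated. -/
def IsCtrlTraj (n : ℕ) (A W : Fin n → Fin n → ℝ) (l b : Fin n → ℝ)
    (R : ℕ → Finset (Fin n)) (CX CY : Finset (Fin n))
    (x y : ℕ → Fin n → ℝ) : Prop :=
  (∀ i ∈ CX, ∀ t, x t i = 1) ∧
  (∀ i ∈ CY, ∀ t, y t i = 1) ∧
  (∀ i, i ∉ CX → x 0 i = -1) ∧
  (∀ i, i ∉ CY → y 0 i = -1) ∧
  (∀ t, ∀ i, i ∉ CX →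
    x (t + 1) i =
      if i ∈ R t then
        if 0 < delta n A W l b i (x t) (y t) then 1
        else if delta n A W l b i (x t) (y t) < 0 then -1
        else x t i
      else x t i) ∧
  (∀ t, ∀ i, i ∉ CY →
    y (t + 1) i =
      if i ∈ R t then (1 - l i) * (∑ j, W i j * y t j) + l i * x (t + 1) i
      else y t i)

/-- The trajectory reaches the `+1` consensus (actions) in finite time. -/
def Reaches (n : ℕ) (x : ℕ → Fin n → ℝ) : Prop :=
  ∃ T : ℕ, ∀ t, T ≤ t → ∀ i, x t i = 1

lemma sum_w_le {n : ℕ} (W : Fin n → Fin n → ℝ) (i : Fin n)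
    (hW0 : ∀ j, 0 ≤ W i j) (hWrow : ∑ j, W i j = 1)
    (y : Fin n → ℝ) (hy : ∀ j, -1 ≤ y j ∧ y j ≤ 1) :
    -1 ≤ ∑ j, W i j * y j ∧ ∑ j, W i j * y j ≤ 1 := by
  constructor
  · calc (-1 : ℝ) = ∑ j, W i j * (-1) := by
          simp [← Finset.sum_mul, hWrow]
    _ ≤ ∑ j, W i j * y j :=
        Finset.sum_le_sum fun j _ => mul_le_mul_of_nonneg_left (hy j).1 (hW0 j)
  · calc ∑ j, W i j * y j ≤ ∑ j, W i j * 1 :=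
        Finset.sum_le_sum fun j _ => mul_le_mul_of_nonneg_left (hy j).2 (hW0 j)
    _ = 1 := by simp [hWrow]

lemma delta_mono {n : ℕ} (A W : Fin n → Fin n → ℝ) (l b : Fin n → ℝ)
    (hA0 : ∀ i j, 0 ≤ A i j) (hW0 : ∀ i j, 0 ≤ W i j)
    (hl : ∀ i, 0 < l i ∧ l i ≤ 1) (hb : ∀ i, 0 < b i ∧ b i ≤ 1)
    (i : Fin n) (x y xb yb : Fin n → ℝ)
    (hx : ∀ j, x j ≤ xb j) (hy : ∀ j, y j ≤ yb j) :
    delta n A W l b i x y ≤ delta n A W l b i xb yb := by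
  unfold delta
  have h1 : (0:ℝ) ≤ 2 * b i * (1 - l i) := by
    have := (hl i).2; have := (hb i).1; nlinarith
  have h2 : (0:ℝ) ≤ 1 - b i := by linarith [(hb i).2]
  have s1 : ∑ j, W i j * y j ≤ ∑ j, W i j * yb j :=
    Finset.sum_le_sum fun j _ => mul_le_mul_of_nonneg_left (hy j) (hW0 i j)
  have s2 : ∑ j, A i j * x j ≤ ∑ j, A i j * xb j :=
    Finset.sum_le_sum fun j _ => mul_le_mul_of_nonneg_left (hx j) (hA0 i j)
  exact add_le_add (mul_le_mul_of_nonneg_left s1 h1) (mul_le_mul_of_nonneg_left s2 h2)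

lemma traj_bounds {n : ℕ} {A W : Fin n → Fin n → ℝ} {l b : Fin n → ℝ}
    {R : ℕ → Finset (Fin n)} {CX CY : Finset (Fin n)} {x y : ℕ → Fin n → ℝ}
    (hW0 : ∀ i j, 0 ≤ W i j) (hWrow : ∀ i, ∑ j, W i j = 1)
    (hl : ∀ i, 0 < l i ∧ l i ≤ 1)
    (h : IsCtrlTraj n A W l b R CX CY x y) :
    ∀ t i, (-1 ≤ x t i ∧ x t i ≤ 1) ∧ (-1 ≤ y t i ∧ y t i ≤ 1) := by
  obtain ⟨hx1, hy1, hx0, hy0, hxu, hyu⟩ := h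
  intro t
  induction t with
  | zero =>
    intro i
    constructor
    · by_cases hi : i ∈ CX
      · rw [hx1 i hi 0]; norm_num
      · rw [hx0 i hi]; norm_num
    · by_cases hi : i ∈ CY
      · rw [hy1 i hi 0]; norm_num
      · rw [hy0 i hi]; norm_num
  | succ t ih =>
    intro i
    have hxb : -1 ≤ x (t+1) i ∧ x (t+1) i ≤ 1 := by
      by_cases hi : i ∈ CX
      · rw [hx1 i hi (t+1)]; norm_num
      · rw [hxu t i hi]
        split_ifs with h1 h2 h3
        · norm_num
        · norm_num
        · exact (ih i).1
        · exact (ih i).1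
    refine ⟨hxb, ?_⟩
    by_cases hi : i ∈ CY
    · rw [hy1 i hi (t+1)]; norm_num
    · rw [hyu t i hi]
      split_ifs with h1
      · have hs := sum_w_le W i (hW0 i) (hWrow i) (y t) (fun j => (ih j).2)
        have hli := hl i
        constructor
        · nlinarith [hxb.1, hs.1]
        · nlinarith [hxb.2, hs.2]
      · exact (ih i).2

/-- Lemma 1, monotonicity with respect to the control sets. -/
theorem control_set_monotonicity
    (n : ℕ) (A W : Fin n → Fin n → ℝ) (l b : Fin n → ℝ)
    (hA0 : ∀ i j, 0 ≤ A i j) (hA1 : ∀ i j, A i j ≤ 1) (hArow : ∀ i, ∑ j, A i j = 1)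
    (hW0 : ∀ i j, 0 ≤ W i j) (hW1 : ∀ i j, W i j ≤ 1) (hWrow : ∀ i, ∑ j, W i j = 1)
    (hl : ∀ i, 0 < l i ∧ l i ≤ 1) (hb : ∀ i, 0 < b i ∧ b i ≤ 1)
    (R : ℕ → Finset (Fin n))
    (CX CY DX DY : Finset (Fin n)) (hX : CX ⊆ DX) (hY : CY ⊆ DY)
    (x y xb yb : ℕ → Fin n → ℝ)
    (h1 : IsCtrlTraj n A W l b R CX CY x y)
    (h2 : IsCtrlTraj n A W l b R DX DY xb yb) :
    (∀ t : ℕ, ∀ i : Fin n, x t i ≤ xb t i ∧ y t i ≤ yb t i) ∧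
    (Reaches n x → Reaches n xb) ∧
    (¬ Reaches n xb → ¬ Reaches n x) := by
  have B1 := traj_bounds hW0 hWrow hl h1
  have B2 := traj_bounds hW0 hWrow hl h2
  obtain ⟨hx1, hy1, hx0, hy0, hxu, hyu⟩ := h1
  obtain ⟨hxb1, hyb1, hxb0, hyb0, hxbu, hybu⟩ := h2
  have key : ∀ t : ℕ, (∀ i, x t i ≤ xb t i) ∧ (∀ i, y t i ≤ yb t i) := by
    intro t
    induction t with
    | zero =>
      constructor
      · intro i
        by_cases hiD : i ∈ DX
        · rw [hxb1 i hiD 0]; exact (B1 0 i).1.2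
        · rw [hxb0 i hiD, hx0 i (fun h => hiD (hX h))]
      · intro i
        by_cases hiD : i ∈ DY
        · rw [hyb1 i hiD 0]; exact (B1 0 i).2.2
        · rw [hyb0 i hiD, hy0 i (fun h => hiD (hY h))]
    | succ t ih =>
      have ihx := ih.1
      have ihy := ih.2
      have hxstep : ∀ i, x (t+1) i ≤ xb (t+1) i := by
        intro i
        by_cases hiD : i ∈ DX
        · rw [hxb1 i hiD (t+1)]; exact (B1 (t+1) i).1.2
        · have hiC : i ∉ CX := fun h => hiD (hX h)
          rw [hxu t i hiC, hxbu t i hiD]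
          by_cases hR : i ∈ R t
          · simp only [if_pos hR]
            have hd := delta_mono A W l b hA0 hW0 hl hb i (x t) (y t) (xb t) (yb t) ihx ihy
            split_ifs <;>
              linarith [hd, (B1 t i).1.2, (B2 t i).1.1, ihx i]
          · simp only [if_neg hR]; exact ihx i
      refine ⟨hxstep, ?_⟩
      intro i
      by_cases hiD : i ∈ DY
      · rw [hyb1 i hiD (t+1)]; exact (B1 (t+1) i).2.2
      · have hiC : i ∉ CY := fun h => hiD (hY h)
        rw [hyu t i hiC, hybu t i hiD]
        by_cases hR : i ∈ R t
        · simp only [if_pos hR]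
          have hs : ∑ j, W i j * y t j ≤ ∑ j, W i j * yb t j :=
            Finset.sum_le_sum fun j _ => mul_le_mul_of_nonneg_left (ihy j) (hW0 i j)
          have hli := hl i
          exact add_le_add (mul_le_mul_of_nonneg_left hs (by linarith [hli.2]))
            (mul_le_mul_of_nonneg_left (hxstep i) (le_of_lt hli.1))
        · simp only [if_neg hR]; exact ihy i
  have hreach : Reaches n x → Reaches n xb := by
    rintro ⟨T, hT⟩
    refine ⟨T, fun t ht i => le_antisymm (B2 t i).1.2 ?_⟩
    rw [← hT t ht i]
    exact (key t).1 i
  exact ⟨fun t i => ⟨(key t).1 i, (key t).2 i⟩, hreach, fun hnb hr => hnb (hreach hr)⟩
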